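/- The five products of Vandermonde determinants d_1 = Δ_{123}Δ_{456}, d_2 = Δ_{124}Δ_{356}, d_3 = Δ_{125}Δ_{346}, d_4 = Δ_{134}Δ_{256}, d_5 = Δ_{135}Δ_{246} satisfy the quartic identity (d_1(d_1 - d_2 + d_3 + d_4 - d_5) + d_2 d_5 + d_3 d_4)^2 - 4 d_2 d_3 d_4 d_5 = 0. -/

import Mathlib

/-!
Let `Q` be the product of the eight differences `x_j - x_i` for `ij ∈ {12, 13, 14, 15, 26, 36, 46, 56}`,
`u = (x₄ - x₂)(x₅ - x₃)` and `v = (x₅ - x₂)(x₄ - x₃)`. Collecting factors gives `d₂d₅ = Q u²` and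
`d₃d₄ = Q v²`, while the linear relation `d₁ - d₂ + d₃ + d₄ - d₅ = -(x₄ - x₁)(x₅ - x₁)(x₆ - x₂)(x₆ - x₃)(u - v)`
with `u - v = (x₃ - x₂)(x₅ - x₄)` gives `d₁(d₁ - d₂ + d₃ + d₄ - d₅) = -Q (u - v)²`. So the bracket is
`2 Q u v`, whose square is `4 (Q u²)(Q v²) = 4 d₂d₃d₄d₅`.
-/

/-- The Vandermonde determinant `Δ_{pqr} = (x_q - x_p)(x_r - x_p)(x_r - x_q)`. -/
def Dlt {R : Type*} [CommRing R] (p q r : R) : R := (q - p) * (r - p) * (r - q)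

section

variable {R : Type*} [CommRing R]

theorem sub_mul_sub_sub_sub_mul_sub (a b c d : R) :
    (c - a) * (d - b) - (d - a) * (c - b) = (b - a) * (d - c) := by
  ring

theorem sq_add_add_sub_four_mul_eq_zero {Q u v B X Y : R} (hB : B = -(Q * (u - v) ^ 2))
    (hX : X = Q * u ^ 2) (hY : Y = Q * v ^ 2) : (B + X + Y) ^ 2 - 4 * (X * Y) = 0 := by
  subst hB hX hY
  ring

theorem Dlt_mul_Dlt_alternating_sum (x1 x2 x3 x4 x5 x6 : R) :
    Dlt x1 x2 x3 * Dlt x4 x5 x6 - Dlt x1 x2 x4 * Dlt x3 x5 x6 + Dlt x1 x2 x5 * Dlt x3 x4 x6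
      + Dlt x1 x3 x4 * Dlt x2 x5 x6 - Dlt x1 x3 x5 * Dlt x2 x4 x6
      = -((x4 - x1) * (x5 - x1) * (x6 - x2) * (x6 - x3) * ((x3 - x2) * (x5 - x4))) := by
  unfold Dlt
  ring

theorem Dlt_mul_Dlt_mul_Dlt_mul_Dlt (x1 x2 x3 x4 x5 x6 : R) :
    Dlt x1 x2 x4 * Dlt x3 x5 x6 * (Dlt x1 x3 x5 * Dlt x2 x4 x6) =
      (x2 - x1) * (x3 - x1) * (x4 - x1) * (x5 - x1) * (x6 - x2) * (x6 - x3) * (x6 - x4) * (x6 - x5)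
        * ((x4 - x2) * (x5 - x3)) ^ 2 := by
  unfold Dlt
  ring

end

/-- The quartic identity satisfied by the five products of Vandermonde determinants. -/
theorem quartic_relation {R : Type*} [CommRing R] (x1 x2 x3 x4 x5 x6 : R) :
    let d1 := Dlt x1 x2 x3 * Dlt x4 x5 x6
    let d2 := Dlt x1 x2 x4 * Dlt x3 x5 x6
    let d3 := Dlt x1 x2 x5 * Dlt x3 x4 x6
    let d4 := Dlt x1 x3 x4 * Dlt x2 x5 x6
    let d5 := Dlt x1 x3 x5 * Dlt x2 x4 x6
    (d1 * (d1 - d2 + d3 + d4 - d5) + d2 * d5 + d3 * d4) ^ 2 - 4 * (d2 * d3 * d4 * d5) = 0 := by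
  intro d1 d2 d3 d4 d5
  set Q := (x2 - x1) * (x3 - x1) * (x4 - x1) * (x5 - x1) * (x6 - x2) * (x6 - x3) * (x6 - x4)
    * (x6 - x5)
  have hB : d1 * (d1 - d2 + d3 + d4 - d5)
      = -(Q * ((x4 - x2) * (x5 - x3) - (x5 - x2) * (x4 - x3)) ^ 2) := by
    rw [show d1 - d2 + d3 + d4 - d5 = _ from Dlt_mul_Dlt_alternating_sum x1 x2 x3 x4 x5 x6,
      sub_mul_sub_sub_sub_mul_sub]
    simp only [d1, Dlt, Q]
    ring
  have hX : d2 * d5 = Q * ((x4 - x2) * (x5 - x3)) ^ 2 := Dlt_mul_Dlt_mul_Dlt_mul_Dlt ..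
  have hY : d3 * d4 = Q * ((x5 - x2) * (x4 - x3)) ^ 2 := by
    rw [show d3 * d4 = _ from Dlt_mul_Dlt_mul_Dlt_mul_Dlt x1 x2 x3 x5 x4 x6]
    ring
  linear_combination sq_add_add_sub_four_mul_eq_zero hB hX hY
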